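/- In the Hom-unital extension Â = A ⊕ K·1_α of a multiplicative Hom-associative algebra A (with x·1_α = 1_α·x = α(x) and α(1_α) = 1_α), the triple (Â, ·, α) satisfies the Hom-associative identity (x·y)·α(z) = α(x)·(y·z) for all x,y,z ∈ Â, and α is multiplicative on Â. -/
import Mathlib


variable {K A : Type*} [Field K] [AddCommGroup A] [Module K A]

/-- Multiplication on the Hom-unital extension `Â = A ⊕ K·1_α`, where
`1_α = (0,1)`, `x·1_α = 1_α·x = α(x)` and `α(1_α) = 1_α`. -/
def hatMul (mul : A →ₗ[K] A →ₗ[K] A) (α : A →ₗ[K] A) (p q : A × K) : A × K :=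
  (mul p.1 q.1 + q.2 • α p.1 + p.2 • α q.1, p.2 * q.2)

/-- The twist map on the Hom-unital extension. -/
def hatTw (α : A →ₗ[K] A) (p : A × K) : A × K := (α p.1, p.2)

/-- The Hom-unital extension `Â = A ⊕ K·1_α` of a multiplicative Hom-associative
algebra is Hom-associative and multiplicative. -/
theorem stmt13 (mul : A →ₗ[K] A →ₗ[K] A) (α : A →ₗ[K] A)
    (hassoc : ∀ x y z : A, mul (mul x y) (α z) = mul (α x) (mul y z))
    (hmult : ∀ x y : A, α (mul x y) = mul (α x) (α y)) :
    (∀ p q r : A × K,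
      hatMul mul α (hatMul mul α p q) (hatTw α r)
        = hatMul mul α (hatTw α p) (hatMul mul α q r)) ∧
    (∀ p q : A × K,
      hatTw α (hatMul mul α p q) = hatMul mul α (hatTw α p) (hatTw α q)) := by
  constructor
  · rintro ⟨a, s⟩ ⟨b, t⟩ ⟨c, u⟩
    simp only [hatMul, hatTw, Prod.mk.injEq]
    constructor
    · simp only [map_add, map_smul, LinearMap.add_apply, LinearMap.smul_apply,
        hassoc, hmult]
      module
    · ring
  · rintro ⟨a, s⟩ ⟨b, t⟩
    simp only [hatMul, hatTw, Prod.mk.injEq, map_add, map_smul, hmult, and_true]
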